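/- Let p, m be positive integers, ρ > 0, δ ∈ ℝ^p, λ ∈ ℝ^m, Λ ∈ ℝ^{p×m}, β, b ∈ ℝ^m, S ∈ ℝ^{p×m}, and let I be the p×p identity. Then δδᵀ + I is positive definite (hence invertible), and the function f(H) = ⟨λ, Hᵀδ + β − b⟩ + ⟨Λ, S − H⟩ + (ρ/2)(‖Hᵀδ + β − b‖² + ‖S − H‖²) over H ∈ ℝ^{p×m} has the unique minimizer H* = (1/ρ)(δδᵀ + I)⁻¹(−δλᵀ + Λ − ρδβᵀ + ρδbᵀ + ρS). -/
import Mathlib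


/-- The ADMM `H`-update subproblem: `δδᵀ + I` is positive definite (hence
invertible), and the quadratic
`f(H) = ⟨λ, Hᵀδ + β - b⟩ + ⟨Λ, S - H⟩ + (ρ/2)(‖Hᵀδ + β - b‖² + ‖S - H‖²)`
has the unique minimizer
`H* = (1/ρ)(δδᵀ + I)⁻¹(-δλᵀ + Λ - ρδβᵀ + ρδbᵀ + ρS)`. -/
theorem H_update_unique_minimizer (p m : ℕ) (hp : 0 < p) (hm : 0 < m)
    (ρ : ℝ) (hρ : 0 < ρ) (δ : Fin p → ℝ) (lam β b : Fin m → ℝ)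
    (Λ S : Matrix (Fin p) (Fin m) ℝ) :
    let M : Matrix (Fin p) (Fin p) ℝ :=
      Matrix.vecMulVec δ δ + (1 : Matrix (Fin p) (Fin p) ℝ)
    let f : Matrix (Fin p) (Fin m) ℝ → ℝ := fun H' =>
      (∑ j, lam j * ((∑ i, H' i j * δ i) + β j - b j)) +
      (∑ i, ∑ j, Λ i j * (S i j - H' i j)) +
      ρ / 2 * ((∑ j, ((∑ i, H' i j * δ i) + β j - b j) ^ 2) +
               (∑ i, ∑ j, (S i j - H' i j) ^ 2))
    let Hstar : Matrix (Fin p) (Fin m) ℝ :=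
      (1 / ρ) • (M⁻¹ *
        (-(Matrix.vecMulVec δ lam) + Λ - ρ • Matrix.vecMulVec δ β +
          ρ • Matrix.vecMulVec δ b + ρ • S))
    M.PosDef ∧ IsUnit M ∧
    (∀ H', f Hstar ≤ f H') ∧ (∀ H', f H' = f Hstar → H' = Hstar) := by
  intro M f Hstar
  -- Positive definiteness of `M = δδᵀ + I`.
  have hsemi : (Matrix.vecMulVec δ δ).PosSemidef := by
    rw [Matrix.vecMulVec_eq Unit]
    simpa using Matrix.posSemidef_self_mul_conjTranspose (Matrix.replicateCol Unit δ)
  have hMpd : M.PosDef := Matrix.PosDef.posSemidef_add hsemi Matrix.PosDef.one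
  have hMunit : IsUnit M := hMpd.isUnit
  have hMdet : IsUnit M.det := (Matrix.isUnit_iff_isUnit_det M).mp hMunit
  -- The stationarity equation `ρ • (M * Hstar) = N`.
  set N : Matrix (Fin p) (Fin m) ℝ :=
    -(Matrix.vecMulVec δ lam) + Λ - ρ • Matrix.vecMulVec δ β +
      ρ • Matrix.vecMulVec δ b + ρ • S with hN
  have hstat : ρ • (M * Hstar) = N := by
    have h1 : M * Hstar = (1 / ρ) • N := by
      rw [show Hstar = (1 / ρ) • (M⁻¹ * N) from rfl, Matrix.mul_smul,
        ← Matrix.mul_assoc, Matrix.mul_nonsing_inv M hMdet, Matrix.one_mul]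
    rw [h1, smul_smul, mul_one_div, div_self hρ.ne', one_smul]
  -- Entrywise stationarity.
  have hKey : ∀ i j, δ i * lam j +
      ρ * (δ i * ((∑ k, Hstar k j * δ k) + β j - b j)) +
      ρ * (Hstar i j - S i j) - Λ i j = 0 := by
    intro i j
    have h2 := congrFun (congrFun hstat i) j
    have h3 : (M * Hstar) i j = δ i * (∑ k, Hstar k j * δ k) + Hstar i j := by
      rw [Matrix.mul_apply]
      have : ∀ k, M i k * Hstar k j
          = δ i * (Hstar k j * δ k) + (if k = i then Hstar k j else 0) := by
        intro k
        simp only [M, Matrix.add_apply, Matrix.vecMulVec_apply, Matrix.one_apply]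
        by_cases h : i = k <;> simp [h, eq_comm] <;> ring
      rw [Finset.sum_congr rfl fun k _ => this k, Finset.sum_add_distrib,
        Finset.sum_ite_eq' Finset.univ i (fun k => Hstar k j), ← Finset.mul_sum]
      simp
    simp only [Matrix.smul_apply, h3, hN, Matrix.add_apply, Matrix.sub_apply,
      Matrix.neg_apply, Matrix.vecMulVec_apply, smul_eq_mul] at h2
    nlinarith [h2]
  -- The key quadratic expansion.
  have hdiff : ∀ D : Matrix (Fin p) (Fin m) ℝ,
      f (Hstar + D) = f Hstar +
        ρ / 2 * ((∑ j, (∑ i, D i j * δ i) ^ 2) + ∑ i, ∑ j, D i j ^ 2) := by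
    intro D
    obtain ⟨w, hw⟩ : ∃ w : Fin m → ℝ, ∀ j, (∑ i, Hstar i j * δ i) = w j :=
      ⟨_, fun j => rfl⟩
    obtain ⟨e, he⟩ : ∃ e : Fin m → ℝ, ∀ j, (∑ i, D i j * δ i) = e j :=
      ⟨_, fun j => rfl⟩
    have hsum : ∀ j, (∑ i, (Hstar i j + D i j) * δ i) = w j + e j := by
      intro j
      rw [← hw, ← he, ← Finset.sum_add_distrib]
      exact Finset.sum_congr rfl fun i _ => by ring
    have hK : ∀ i j, δ i * lam j + ρ * (δ i * (w j + β j - b j)) +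
        ρ * (Hstar i j - S i j) - Λ i j = 0 := by
      intro i j
      have := hKey i j
      rw [show (∑ k, Hstar k j * δ k) = w j from hw j] at this
      exact this
    -- The cross term vanishes.
    have hcross : (∑ j, lam j * e j) + ρ * (∑ j, e j * (w j + β j - b j)) -
        ρ * (∑ i, ∑ j, D i j * (S i j - Hstar i j)) -
        (∑ i, ∑ j, Λ i j * D i j) = 0 := by
      have h0 : ∑ i, ∑ j, D i j * (δ i * lam j +
          ρ * (δ i * (w j + β j - b j)) + ρ * (Hstar i j - S i j) - Λ i j)
          = 0 :=
        Finset.sum_eq_zero fun i _ => Finset.sum_eq_zero fun j _ => by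
          rw [hK i j, mul_zero]
      have h1 : ∀ i, ∑ j, D i j * (δ i * lam j +
          ρ * (δ i * (w j + β j - b j)) + ρ * (Hstar i j - S i j) - Λ i j)
          = (∑ j, D i j * δ i * lam j) +
            ρ * (∑ j, D i j * δ i * (w j + β j - b j)) -
            ρ * (∑ j, D i j * (S i j - Hstar i j)) - ∑ j, Λ i j * D i j := by
        intro i
        rw [Finset.mul_sum, Finset.mul_sum, ← Finset.sum_add_distrib,
          ← Finset.sum_sub_distrib, ← Finset.sum_sub_distrib]
        exact Finset.sum_congr rfl fun j _ => by ring
      rw [Finset.sum_congr rfl fun i _ => h1 i] at h0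
      rw [Finset.sum_sub_distrib, Finset.sum_sub_distrib,
        Finset.sum_add_distrib, ← Finset.mul_sum, ← Finset.mul_sum,
        show (∑ i, ∑ j, D i j * δ i * lam j)
            = ∑ j, ∑ i, D i j * δ i * lam j from Finset.sum_comm,
        show (∑ i, ∑ j, D i j * δ i * (w j + β j - b j))
            = ∑ j, ∑ i, D i j * δ i * (w j + β j - b j) from Finset.sum_comm]
        at h0
      have h2 : ∀ j, (∑ i, D i j * δ i * lam j) = lam j * e j := by
        intro j
        rw [← he, ← Finset.sum_mul]
        ring
      have h3 : ∀ j, (∑ i, D i j * δ i * (w j + β j - b j))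
          = e j * (w j + β j - b j) := by
        intro j
        rw [← he, ← Finset.sum_mul]
      rw [Finset.sum_congr rfl fun j _ => h2 j,
        Finset.sum_congr rfl fun j _ => h3 j] at h0
      linarith [h0]
    -- Expand all the composite sums.
    simp only [f, Matrix.add_apply, hsum, hw, he]
    have E1 : ∑ j, lam j * (w j + e j + β j - b j)
        = (∑ j, lam j * (w j + β j - b j)) + ∑ j, lam j * e j := by
      rw [← Finset.sum_add_distrib]
      exact Finset.sum_congr rfl fun j _ => by ring
    have E2 : ∑ i, ∑ j, Λ i j * (S i j - (Hstar i j + D i j))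
        = (∑ i, ∑ j, Λ i j * (S i j - Hstar i j)) - ∑ i, ∑ j, Λ i j * D i j := by
      rw [← Finset.sum_sub_distrib]
      refine Finset.sum_congr rfl fun i _ => ?_
      rw [← Finset.sum_sub_distrib]
      exact Finset.sum_congr rfl fun j _ => by ring
    have E3 : ∑ j, (w j + e j + β j - b j) ^ 2
        = (∑ j, (w j + β j - b j) ^ 2) + (∑ j, e j ^ 2) +
          2 * ∑ j, e j * (w j + β j - b j) := by
      rw [Finset.mul_sum, ← Finset.sum_add_distrib, ← Finset.sum_add_distrib]
      exact Finset.sum_congr rfl fun j _ => by ring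
    have E4 : ∑ i, ∑ j, (S i j - (Hstar i j + D i j)) ^ 2
        = (∑ i, ∑ j, (S i j - Hstar i j) ^ 2) + (∑ i, ∑ j, D i j ^ 2) -
          2 * ∑ i, ∑ j, D i j * (S i j - Hstar i j) := by
      rw [Finset.mul_sum, ← Finset.sum_add_distrib, ← Finset.sum_sub_distrib]
      refine Finset.sum_congr rfl fun i _ => ?_
      rw [Finset.mul_sum, ← Finset.sum_add_distrib, ← Finset.sum_sub_distrib]
      exact Finset.sum_congr rfl fun j _ => by ring
    rw [E1, E2, E3, E4]
    linear_combination hcross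
  -- Put things together.
  refine ⟨hMpd, hMunit, ?_, ?_⟩
  · intro H'
    have h := hdiff (H' - Hstar)
    rw [add_sub_cancel] at h
    rw [h]
    have h1 : (0:ℝ) ≤ (∑ j, (∑ i, (H' - Hstar) i j * δ i) ^ 2) +
        ∑ i, ∑ j, (H' - Hstar) i j ^ 2 :=
      add_nonneg (Finset.sum_nonneg fun j _ => sq_nonneg _)
        (Finset.sum_nonneg fun i _ => Finset.sum_nonneg fun j _ => sq_nonneg _)
    nlinarith
  · intro H' hf
    have h := hdiff (H' - Hstar)
    rw [add_sub_cancel, hf] at h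
    have h1 : (0:ℝ) ≤ ∑ j, (∑ i, (H' - Hstar) i j * δ i) ^ 2 :=
      Finset.sum_nonneg fun j _ => sq_nonneg _
    have h2 : (0:ℝ) ≤ ∑ i, ∑ j, (H' - Hstar) i j ^ 2 :=
      Finset.sum_nonneg fun i _ => Finset.sum_nonneg fun j _ => sq_nonneg _
    have h3 : (∑ i, ∑ j, (H' - Hstar) i j ^ 2) = 0 := by nlinarith
    have h4 : ∀ i ∈ Finset.univ, ∀ j ∈ Finset.univ,
        ((H' - Hstar) i j) ^ 2 = 0 := by
      intro i _ j _
      have := (Finset.sum_eq_zero_iff_of_nonneg fun i _ =>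
        Finset.sum_nonneg fun j _ => sq_nonneg ((H' - Hstar) i j)).mp h3 i
        (Finset.mem_univ i)
      exact (Finset.sum_eq_zero_iff_of_nonneg fun j _ =>
        sq_nonneg ((H' - Hstar) i j)).mp this j (Finset.mem_univ j)
    ext i j
    have := h4 i (Finset.mem_univ i) j (Finset.mem_univ j)
    have h5 : (H' - Hstar) i j = 0 := by
      exact pow_eq_zero_iff (n := 2) (by norm_num) |>.mp this
    simpa [Matrix.sub_apply, sub_eq_zero] using h5
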